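/- Let Ω be the closed unit disk in ℝ², let λ > 0, let 0 < α ≤ 1, and let ν_α := (1−α)·(dx/π restricted to Ω) + α·(dσ/(2π) on ∂Ω). Define K_b(m, ν_α) := sup_{x ∈ Ω} Σ_{j=−m}^{m} |b_{λ,j}(x)|² / ‖b_{λ,j}‖²_{L²(ν_α)}. Then there exists a constant C (depending on λ and α) such that for all sufficiently large m, K_b(m, ν_α) ≤ C + 2m/α. -/

import Mathlib

/-!
Up to a phase, `b_{λ,j}(x) = J_n(λ|x|)` with `n = |j|`, and the boundary part of `ν_α` gives
`‖b_{λ,j}‖² ≥ α J_n(λ)²`. Once `n ≥ 2` and `λ² ≤ n + 1`, the power series of `J_n(x) - J_n(y)`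
(for `0 ≤ y ≤ x ≤ λ`) is alternating with terms that at least halve at each step, so by Leibniz
`J_n` is increasing on `[0, λ]` and `J_n(λ) > 0`. Each such `j` therefore contributes at most `1/α`,
and at most `2m` indices of `[-m, m]` are of this kind. The finitely many remaining indices
contribute a bound independent of `m`, using the majorant `Σ_k (λ/2)^(n+2k) / (k! (n+k)!)` of
`|J_n|` on `[0, λ]`.
-/

open MeasureTheory Metric

/-- Bessel function of the first kind of nonnegative integer order. -/
noncomputable def besselJnat (n : ℕ) (x : ℝ) : ℝ :=
  ∑' k : ℕ, ((-1 : ℝ) ^ k / ((Nat.factorial k : ℝ) * (Nat.factorial (n + k) : ℝ))) *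
    (x / 2) ^ (n + 2 * k)

/-- Bessel function of the first kind of integer order, with `J_{-n} = (-1)^n J_n`. -/
noncomputable def besselJ (n : ℤ) (x : ℝ) : ℝ :=
  if 0 ≤ n then besselJnat n.toNat x else (-1 : ℝ) ^ n.natAbs * besselJnat n.natAbs x

/-- The Fourier-Bessel function `b_{λ,j}(x) = e^{ijθ} J_j(λ r)` on `ℝ² ≃ ℂ`. -/
noncomputable def fourierBessel (lam : ℝ) (j : ℤ) (z : ℂ) : ℂ :=
  Complex.exp (Complex.I * j * z.arg) * besselJ j (lam * ‖z‖)

/-- Normalized uniform measure `dx/π` on the closed unit disk. -/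
noncomputable def unifDisk : Measure ℂ :=
  (ENNReal.ofReal Real.pi)⁻¹ • (volume.restrict (closedBall (0 : ℂ) 1))

/-- Normalized arc-length measure `dσ/(2π)` on the unit circle. -/
noncomputable def circleUnif : Measure ℂ :=
  (ENNReal.ofReal (2 * Real.pi))⁻¹ •
    Measure.map (fun θ : ℝ => Complex.exp (θ * Complex.I))
      (volume.restrict (Set.Ioc (0 : ℝ) (2 * Real.pi)))

/-- The mixed measure `ν_α = (1-α) dx/π + α dσ/(2π)`. -/
noncomputable def nuAlpha (a : ℝ) : Measure ℂ :=
  ENNReal.ofReal (1 - a) • unifDisk + ENNReal.ofReal a • circleUnif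

/-- Squared `L²(ν)` norm of a function. -/
noncomputable def l2normSq (ν : Measure ℂ) (f : ℂ → ℂ) : ℝ :=
  ∫ z, ‖f z‖ ^ 2 ∂ν

/-- A measure on `ℂ` invariant under every rotation about the origin. -/
def RotationInvariant (ν : Measure ℂ) : Prop :=
  ∀ θ : ℝ, Measure.map (fun z : ℂ => Complex.exp (θ * Complex.I) * z) ν = ν

/-- Plane wave `e^{i k·x}` with wave vector `k = λ(cos φ, sin φ)`. -/
noncomputable def planeWaveFn (lam phi : ℝ) (z : ℂ) : ℂ :=
  Complex.exp (Complex.I * ((lam * (Real.cos phi * z.re + Real.sin phi * z.im) : ℝ) : ℂ))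

/-- Angle `φ_l = 2πl/(2m+1)`. -/
noncomputable def phiAngle (m : ℕ) (l : ℤ) : ℝ := 2 * Real.pi * l / (2 * m + 1)

/-- Discretized plane-wave combination
`b_j^m = (1/((2m+1) i^j)) Σ_{l=-m}^m e^{ijφ_l} e_{k_l}`. -/
noncomputable def pwave (lam : ℝ) (m : ℕ) (j : ℤ) (z : ℂ) : ℂ :=
  (1 / (((2 * m + 1 : ℕ) : ℂ) * Complex.I ^ j)) *
    ∑ l ∈ Finset.Icc (-(m : ℤ)) (m : ℤ),
      Complex.exp (Complex.I * j * ((phiAngle m l : ℝ) : ℂ)) * planeWaveFn lam (phiAngle m l) z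

/-- The quantity `K(V_m^b, ν)` for the Fourier-Bessel space on the unit disk. -/
noncomputable def Kb (lam : ℝ) (ν : Measure ℂ) (m : ℕ) : ℝ :=
  ⨆ z : closedBall (0 : ℂ) 1,
    ∑ j ∈ Finset.Icc (-(m : ℤ)) (m : ℤ),
      ‖fourierBessel lam j ↑z‖ ^ 2 / l2normSq ν (fourierBessel lam j)

/-- The quantity `K(V_m^e, ν)` for the plane-wave space on the unit disk. -/
noncomputable def Ke (lam : ℝ) (ν : Measure ℂ) (m : ℕ) : ℝ :=
  ⨆ z : closedBall (0 : ℂ) 1,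
    ∑ j ∈ Finset.Icc (-(m : ℤ)) (m : ℤ),
      ‖pwave lam m j ↑z‖ ^ 2 / l2normSq ν (pwave lam m j)

/-- Laplacian of a function on `ℝ² ≃ ℂ`. -/
noncomputable def laplacian2 (u : ℂ → ℂ) (z : ℂ) : ℂ :=
  fderiv ℝ (fun w => fderiv ℝ u w 1) z 1 + fderiv ℝ (fun w => fderiv ℝ u w Complex.I) z Complex.I

open scoped Nat

theorem pow_add_two_sub_pow_add_two_le {b c Λ : ℝ} (hc : 0 ≤ c) (hcb : c ≤ b) (hbΛ : b ≤ Λ)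
    {m : ℕ} (hm : 2 ≤ m) : b ^ (m + 2) - c ^ (m + 2) ≤ 2 * Λ ^ 2 * (b ^ m - c ^ m) := by
  obtain ⟨p, rfl⟩ := Nat.exists_eq_add_of_le' hm
  have hp : c ^ p ≤ b ^ p := pow_le_pow_left₀ hc hcb p
  have hcross : c ^ p * (b ^ 2 - c ^ 2) ≤ b ^ (p + 2) - c ^ (p + 2) := by
    rw [pow_add, pow_add]; nlinarith [pow_nonneg hc p]
  have hdiff : 0 ≤ b ^ (p + 2) - c ^ (p + 2) := by
    linarith [pow_le_pow_left₀ hc hcb (p + 2)]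
  have hsq : b ^ 2 + c ^ 2 ≤ 2 * Λ ^ 2 := by nlinarith
  calc b ^ (p + 2 + 2) - c ^ (p + 2 + 2)
      = b ^ 2 * (b ^ (p + 2) - c ^ (p + 2)) + c ^ 2 * (c ^ p * (b ^ 2 - c ^ 2)) := by ring
    _ ≤ (b ^ 2 + c ^ 2) * (b ^ (p + 2) - c ^ (p + 2)) := by nlinarith [sq_nonneg c]
    _ ≤ 2 * Λ ^ 2 * (b ^ (p + 2) - c ^ (p + 2)) := by gcongr

noncomputable def besselTerm (n : ℕ) (x : ℝ) (k : ℕ) : ℝ :=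
  (x / 2) ^ (n + 2 * k) / (k ! * (n + k)! : ℝ)

theorem besselJnat_eq_tsum (n : ℕ) (x : ℝ) :
    besselJnat n x = ∑' k, (-1) ^ k * besselTerm n x k := by
  unfold besselJnat besselTerm
  congr 1 with k
  ring

theorem besselTerm_nonneg (n : ℕ) {x : ℝ} (hx : 0 ≤ x) (k : ℕ) : 0 ≤ besselTerm n x k := by
  unfold besselTerm; positivity

theorem besselTerm_le_besselTerm (n : ℕ) {x y : ℝ} (hx : 0 ≤ x) (hxy : x ≤ y) (k : ℕ) :
    besselTerm n x k ≤ besselTerm n y k := by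
  unfold besselTerm; gcongr

theorem summable_besselTerm (n : ℕ) (x : ℝ) : Summable (besselTerm n x) := by
  refine .of_norm_bounded ((Real.summable_pow_div_factorial ((x / 2) ^ 2)).mul_left (|x / 2| ^ n))
    fun k => ?_
  have hfac : (k ! : ℝ) ≤ k ! * (n + k)! := le_mul_of_one_le_right (by positivity)
    (by exact_mod_cast Nat.one_le_iff_ne_zero.mpr (Nat.factorial_ne_zero _))
  rw [besselTerm, Real.norm_eq_abs, abs_div, abs_pow, pow_add, pow_mul, sq_abs,
    abs_of_pos (by positivity : (0 : ℝ) < k ! * (n + k)!), mul_div_assoc]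
  gcongr

theorem abs_besselJnat_le (n : ℕ) {t L : ℝ} (ht : 0 ≤ t) (htL : t ≤ L) :
    |besselJnat n t| ≤ ∑' k, besselTerm n L k := by
  rw [besselJnat_eq_tsum]
  calc |∑' k, (-1) ^ k * besselTerm n t k| ≤ ∑' k, |(-1) ^ k * besselTerm n t k| := by
        simpa only [Real.norm_eq_abs] using
          norm_tsum_le_tsum_norm (summable_besselTerm n t).alternating.norm
    _ = ∑' k, besselTerm n t k := by
        simp [abs_of_nonneg (besselTerm_nonneg n ht _)]
    _ ≤ ∑' k, besselTerm n L k :=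
        (summable_besselTerm n t).tsum_le_tsum (besselTerm_le_besselTerm n ht htL)
          (summable_besselTerm n L)

theorem besselTerm_succ_sub_le_half {n : ℕ} (hn : 2 ≤ n) {x y L : ℝ} (hL : L ^ 2 ≤ n + 1)
    (hy : 0 ≤ y) (hyx : y ≤ x) (hxL : x ≤ L) (k : ℕ) :
    besselTerm n x (k + 1) - besselTerm n y (k + 1) ≤
      (besselTerm n x k - besselTerm n y k) / 2 := by
  have hF : ((k + 1)! * (n + (k + 1))! : ℝ) = ((k + 1) * (n + k + 1)) * (k ! * (n + k)!) := by
    push_cast [Nat.factorial_succ, show n + (k + 1) = n + k + 1 by ring]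
    ring
  have hpow := pow_add_two_sub_pow_add_two_le (by positivity : 0 ≤ y / 2)
    (by linarith : y / 2 ≤ x / 2) (by linarith : x / 2 ≤ L / 2) (by omega : 2 ≤ n + 2 * k)
  have hcoef : L ^ 2 ≤ (k + 1) * (n + k + 1) := by
    nlinarith [(Nat.cast_nonneg k : (0 : ℝ) ≤ k)]
  have hdiff : 0 ≤ (x / 2) ^ (n + 2 * k) - (y / 2) ^ (n + 2 * k) := by
    have : (y / 2) ^ (n + 2 * k) ≤ (x / 2) ^ (n + 2 * k) := by gcongr
    linarith
  simp only [besselTerm, ← sub_div, hF, show n + 2 * (k + 1) = n + 2 * k + 2 by ring]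
  rw [div_div, div_le_div_iff₀ (by positivity) (by positivity)]
  have : 0 < (k ! * (n + k)! : ℝ) := by positivity
  nlinarith [mul_le_mul_of_nonneg_right hcoef hdiff]

theorem sub_pow_div_le_besselJnat_sub {n : ℕ} (hn : 2 ≤ n) {x y L : ℝ} (hL : L ^ 2 ≤ n + 1)
    (hy : 0 ≤ y) (hyx : y ≤ x) (hxL : x ≤ L) :
    ((x / 2) ^ n - (y / 2) ^ n) / (2 * n !) ≤ besselJnat n x - besselJnat n y := by
  set d : ℕ → ℝ := fun k => besselTerm n x k - besselTerm n y k
  have hd_nonneg : ∀ k, 0 ≤ d k := fun k =>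
    sub_nonneg.mpr (besselTerm_le_besselTerm n hy hyx k)
  have hd_succ : ∀ k, d (k + 1) ≤ d k / 2 := besselTerm_succ_sub_le_half hn hL hy hyx hxL
  have hd_anti : Antitone d :=
    antitone_nat_of_succ_le fun k => (hd_succ k).trans (by linarith [hd_nonneg k])
  have hd_sum : Summable d := (summable_besselTerm n x).sub (summable_besselTerm n y)
  have hJ : besselJnat n x - besselJnat n y = ∑' k, (-1) ^ k * d k := by
    simp only [besselJnat_eq_tsum, d, mul_sub]
    exact ((summable_besselTerm n x).alternating.tsum_sub
      (summable_besselTerm n y).alternating).symm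
  have hleib : d 0 - d 1 ≤ ∑' k, (-1) ^ k * d k := by
    simpa [Finset.sum_range_succ, sub_eq_add_neg] using
      hd_anti.alternating_series_le_tendsto hd_sum.tendsto_alternating_series_tsum 1
  have hd0 : d 0 = ((x / 2) ^ n - (y / 2) ^ n) / n ! := by simp [d, besselTerm, sub_div]
  calc ((x / 2) ^ n - (y / 2) ^ n) / (2 * n !) = d 0 / 2 := by rw [hd0]; ring
    _ ≤ d 0 - d 1 := by linarith [hd_succ 0]
    _ ≤ besselJnat n x - besselJnat n y := hJ ▸ hleib

theorem besselJnat_zero {n : ℕ} (hn : n ≠ 0) : besselJnat n 0 = 0 := by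
  simp [besselJnat_eq_tsum, besselTerm, hn]

theorem monotoneOn_besselJnat {n : ℕ} (hn : 2 ≤ n) {L : ℝ} (hL : L ^ 2 ≤ n + 1) :
    MonotoneOn (besselJnat n) (Set.Icc 0 L) := by
  intro y hy x hx hyx
  have := sub_pow_div_le_besselJnat_sub hn hL hy.1 hyx hx.2
  have : (y / 2) ^ n ≤ (x / 2) ^ n := by gcongr; linarith [hy.1]
  have : 0 ≤ ((x / 2) ^ n - (y / 2) ^ n) / (2 * n !) := div_nonneg (by linarith) (by positivity)
  linarith

theorem besselJnat_pos {n : ℕ} (hn : 2 ≤ n) {L : ℝ} (hL0 : 0 < L) (hL : L ^ 2 ≤ n + 1) :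
    0 < besselJnat n L := by
  have h := sub_pow_div_le_besselJnat_sub hn hL le_rfl hL0.le le_rfl
  rw [besselJnat_zero (by omega), zero_div, zero_pow (by omega), sub_zero, sub_zero] at h
  exact lt_of_lt_of_le (by positivity) h

theorem sq_besselJnat_le {n : ℕ} (hn : 2 ≤ n) {t L : ℝ} (hL : L ^ 2 ≤ n + 1)
    (ht : 0 ≤ t) (htL : t ≤ L) : besselJnat n t ^ 2 ≤ besselJnat n L ^ 2 := by
  have hmono := monotoneOn_besselJnat hn hL
  have hmem : t ∈ Set.Icc 0 L := ⟨ht, htL⟩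
  have h0 := hmono ⟨le_rfl, ht.trans htL⟩ hmem ht
  rw [besselJnat_zero (by omega)] at h0
  exact pow_le_pow_left₀ h0 (hmono hmem ⟨ht.trans htL, le_rfl⟩ htL) 2

theorem measurable_besselJnat (n : ℕ) : Measurable (besselJnat n) := by
  refine measurable_of_tendsto_metrizable
    (f := fun N x => ∑ k ∈ Finset.range N, (-1) ^ k * besselTerm n x k)
    (fun N => Finset.measurable_sum _ fun k _ => ?_) (tendsto_pi_nhds.mpr fun x => ?_)
  · unfold besselTerm; fun_prop
  · rw [besselJnat_eq_tsum]
    exact (summable_besselTerm n x).tendsto_alternating_series_tsum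

theorem abs_besselJ (j : ℤ) (t : ℝ) : |besselJ j t| = |besselJnat j.natAbs t| := by
  unfold besselJ
  split_ifs with h
  · rw [show j.toNat = j.natAbs by omega]
  · simp [abs_mul]

theorem norm_fourierBessel (lam : ℝ) (j : ℤ) (z : ℂ) :
    ‖fourierBessel lam j z‖ = |besselJnat j.natAbs (lam * ‖z‖)| := by
  have hphase : Complex.I * j * z.arg = ((j * z.arg : ℝ) : ℂ) * Complex.I := by push_cast; ring
  rw [fourierBessel, norm_mul, hphase, Complex.norm_exp_ofReal_mul_I, one_mul, Complex.norm_real,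
    Real.norm_eq_abs, abs_besselJ]

theorem ae_norm_eq_one_circleUnif : ∀ᵐ z ∂circleUnif, ‖z‖ = 1 := by
  have hexp : Measurable fun θ : ℝ => Complex.exp (θ * Complex.I) := by fun_prop
  unfold circleUnif
  refine Measure.ae_smul_measure ((ae_map_iff hexp.aemeasurable
    (measurableSet_eq_fun (by fun_prop) (by fun_prop))).mpr (ae_of_all _ fun θ => ?_)) _
  exact Complex.norm_exp_ofReal_mul_I θ

instance : IsProbabilityMeasure circleUnif := by
  constructor
  rw [circleUnif, Measure.smul_apply, Measure.map_apply (by fun_prop) MeasurableSet.univ,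
    Set.preimage_univ, Measure.restrict_apply_univ, Real.volume_Ioc, sub_zero, smul_eq_mul]
  exact ENNReal.inv_mul_cancel (by simp [Real.pi_pos]) ENNReal.ofReal_ne_top

instance : IsFiniteMeasure unifDisk := by
  have : IsFiniteMeasure (volume.restrict (closedBall (0 : ℂ) 1)) :=
    isFiniteMeasure_restrict.mpr (isCompact_closedBall 0 1).measure_lt_top.ne
  exact Measure.smul_finite _ (by simp [Real.pi_pos])

instance (a : ℝ) : IsFiniteMeasure (nuAlpha a) := by
  have := Measure.smul_finite unifDisk (ENNReal.ofReal_ne_top (r := 1 - a))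
  have := Measure.smul_finite circleUnif (ENNReal.ofReal_ne_top (r := a))
  rw [nuAlpha]; infer_instance

theorem ae_mem_closedBall_nuAlpha (a : ℝ) : ∀ᵐ z ∂nuAlpha a, z ∈ closedBall (0 : ℂ) 1 := by
  refine ae_add_measure_iff.mpr ⟨Measure.ae_smul_measure ?_ _,
    Measure.ae_smul_measure ?_ _⟩
  · exact Measure.ae_smul_measure (ae_restrict_mem measurableSet_closedBall) _
  · filter_upwards [ae_norm_eq_one_circleUnif] with z hz
    exact mem_closedBall_zero_iff.mpr hz.le

theorem mul_integral_circleUnif_le_l2normSq {a : ℝ} (ha : 0 ≤ a) {f : ℂ → ℂ}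
    (hf : Integrable (fun z => ‖f z‖ ^ 2) (nuAlpha a)) :
    a * ∫ z, ‖f z‖ ^ 2 ∂circleUnif ≤ l2normSq (nuAlpha a) f := by
  calc a * ∫ z, ‖f z‖ ^ 2 ∂circleUnif = ∫ z, ‖f z‖ ^ 2 ∂(ENNReal.ofReal a • circleUnif) := by
        rw [integral_smul_measure, ENNReal.toReal_ofReal ha, smul_eq_mul]
    _ ≤ l2normSq (nuAlpha a) f :=
        integral_mono_measure (Measure.le_add_left le_rfl) (ae_of_all _ fun z => by positivity) hf

theorem integrable_sq_norm_fourierBessel (lam : ℝ) (hlam : 0 ≤ lam) (a : ℝ) (j : ℤ) :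
    Integrable (fun z => ‖fourierBessel lam j z‖ ^ 2) (nuAlpha a) := by
  simp only [norm_fourierBessel, sq_abs]
  have hmeas : Measurable fun z : ℂ => besselJnat j.natAbs (lam * ‖z‖) ^ 2 :=
    ((measurable_besselJnat _).comp (by fun_prop)).pow_const 2
  refine Integrable.of_bound hmeas.aestronglyMeasurable ((∑' k, besselTerm j.natAbs lam k) ^ 2) ?_
  filter_upwards [ae_mem_closedBall_nuAlpha a] with z hz
  have hz : ‖z‖ ≤ 1 := mem_closedBall_zero_iff.mp hz
  rw [Real.norm_eq_abs, abs_pow]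
  exact pow_le_pow_left₀ (abs_nonneg _)
    (abs_besselJnat_le _ (by positivity) (mul_le_of_le_one_right hlam hz)) 2

theorem mul_sq_besselJnat_le_l2normSq (lam : ℝ) (hlam : 0 ≤ lam) {a : ℝ} (ha : 0 ≤ a) (j : ℤ) :
    a * besselJnat j.natAbs lam ^ 2 ≤ l2normSq (nuAlpha a) (fourierBessel lam j) := by
  have hcircle : ∫ z, ‖fourierBessel lam j z‖ ^ 2 ∂circleUnif = besselJnat j.natAbs lam ^ 2 := by
    rw [integral_congr_ae (g := fun _ => besselJnat j.natAbs lam ^ 2)]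
    · simp
    · filter_upwards [ae_norm_eq_one_circleUnif] with z hz
      rw [norm_fourierBessel, hz, mul_one, sq_abs]
  rw [← hcircle]
  exact mul_integral_circleUnif_le_l2normSq ha (integrable_sq_norm_fourierBessel lam hlam a j)

theorem sum_Icc_le_of_natAbs_le {f g : ℤ → ℝ} {N : ℕ} {B : ℝ} (hN : 0 < N) (hB : 0 ≤ B)
    (hg : ∀ j, 0 ≤ g j) (hsmall : ∀ j, j.natAbs < N → f j ≤ g j)
    (hlarge : ∀ j, N ≤ j.natAbs → f j ≤ B) (m : ℕ) :
    ∑ j ∈ Finset.Icc (-(m : ℤ)) m, f j ≤ ∑ j ∈ Finset.Ioo (-(N : ℤ)) N, g j + 2 * m * B := by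
  set s := Finset.Icc (-(m : ℤ)) m
  rw [← Finset.sum_filter_add_sum_filter_not s (fun j => j.natAbs < N)]
  gcongr ?_ + ?_
  · calc ∑ j ∈ s with j.natAbs < N, f j ≤ ∑ j ∈ s with j.natAbs < N, g j :=
          Finset.sum_le_sum fun j hj => hsmall j (Finset.mem_filter.mp hj).2
      _ ≤ ∑ j ∈ Finset.Ioo (-(N : ℤ)) N, g j :=
          Finset.sum_le_sum_of_subset_of_nonneg
            (fun j hj => by simp only [Finset.mem_filter, Finset.mem_Ioo] at hj ⊢; omega)
            fun j _ _ => hg j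
  · have hcard : (s.filter fun j => ¬j.natAbs < N).card ≤ 2 * m := by
      calc (s.filter fun j => ¬j.natAbs < N).card ≤ (s.erase 0).card :=
            Finset.card_le_card fun j hj => by
              rw [Finset.mem_filter] at hj
              exact Finset.mem_erase.mpr ⟨by rintro rfl; exact hj.2 hN, hj.1⟩
        _ = 2 * m := by
            rw [Finset.card_erase_of_mem (by simp [s]), Int.card_Icc]; omega
    calc ∑ j ∈ s with ¬j.natAbs < N, f j ≤ (s.filter fun j => ¬j.natAbs < N).card • B :=
          Finset.sum_le_card_nsmul _ _ _ fun j hj =>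
            hlarge j (not_lt.mp (Finset.mem_filter.mp hj).2)
      _ ≤ 2 * m * B := by
          rw [nsmul_eq_mul]; gcongr; exact_mod_cast hcard

theorem l2normSq_nonneg (ν : Measure ℂ) (f : ℂ → ℂ) : 0 ≤ l2normSq ν f :=
  integral_nonneg fun _ => by positivity

theorem sq_norm_fourierBessel_div_le_one_div {lam : ℝ} (hlam : 0 < lam) {a : ℝ} (ha : 0 < a)
    {j : ℤ} (hj : 2 ≤ j.natAbs) (hjlam : lam ^ 2 ≤ j.natAbs + 1) {z : ℂ} (hz : ‖z‖ ≤ 1) :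
    ‖fourierBessel lam j z‖ ^ 2 / l2normSq (nuAlpha a) (fourierBessel lam j) ≤ 1 / a := by
  have hJ := besselJnat_pos hj hlam hjlam
  have hpos : 0 < a * besselJnat j.natAbs lam ^ 2 := by positivity
  calc ‖fourierBessel lam j z‖ ^ 2 / l2normSq (nuAlpha a) (fourierBessel lam j)
      ≤ besselJnat j.natAbs lam ^ 2 / (a * besselJnat j.natAbs lam ^ 2) := by
        rw [norm_fourierBessel, sq_abs]
        exact div_le_div₀ (sq_nonneg _)
          (sq_besselJnat_le hj hjlam (by positivity) (mul_le_of_le_one_right hlam.le hz)) hpos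
          (mul_sq_besselJnat_le_l2normSq lam hlam.le ha.le j)
    _ = 1 / a := by field_simp

theorem sq_norm_fourierBessel_div_le_tsum_besselTerm (lam : ℝ) (hlam : 0 ≤ lam) (ν : Measure ℂ)
    (j : ℤ) {z : ℂ} (hz : ‖z‖ ≤ 1) :
    ‖fourierBessel lam j z‖ ^ 2 / l2normSq ν (fourierBessel lam j) ≤
      (∑' k, besselTerm j.natAbs lam k) ^ 2 / l2normSq ν (fourierBessel lam j) := by
  rw [norm_fourierBessel]
  gcongr
  · exact l2normSq_nonneg _ _
  · exact abs_besselJnat_le _ (by positivity) (mul_le_of_le_one_right hlam hz)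

theorem stmt_10_general (lam : ℝ) (hlam : 0 < lam) (a : ℝ) (ha0 : 0 < a) :
    ∃ C : ℝ, ∃ m₀ : ℕ, ∀ m : ℕ, m₀ ≤ m →
      Kb lam (nuAlpha a) m ≤ C + 2 * (m : ℝ) / a := by
  set N := max 2 ⌈lam ^ 2⌉₊
  set g : ℤ → ℝ := fun j =>
    (∑' k, besselTerm j.natAbs lam k) ^ 2 / l2normSq (nuAlpha a) (fourierBessel lam j)
  refine ⟨∑ j ∈ Finset.Ioo (-(N : ℤ)) N, g j, 0, fun m _ => ciSup_le fun z => ?_⟩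
  have hz : ‖(z : ℂ)‖ ≤ 1 := mem_closedBall_zero_iff.mp z.2
  refine (sum_Icc_le_of_natAbs_le (N := N) (B := 1 / a) (by positivity) (by positivity)
    (fun j => div_nonneg (sq_nonneg _) (l2normSq_nonneg _ _))
    (fun j _ => sq_norm_fourierBessel_div_le_tsum_besselTerm lam hlam.le _ j hz)
    (fun j hj => ?_) m).trans_eq (by ring)
  have hceil : lam ^ 2 ≤ ⌈lam ^ 2⌉₊ := Nat.le_ceil _
  have : (⌈lam ^ 2⌉₊ : ℝ) ≤ j.natAbs := by exact_mod_cast (le_max_right _ _).trans hj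
  exact sq_norm_fourierBessel_div_le_one_div hlam ha0 ((le_max_left _ _).trans hj) (by linarith) hz

/-- For the Fourier-Bessel space `V_m^b` and the measure `ν_α`, `0 < α ≤ 1`,
there is a constant `C` (depending on `λ, α`) with `K_b(m, ν_α) ≤ C + 2m/α` for all
sufficiently large `m`. -/
theorem stmt_10 (lam : ℝ) (hlam : 0 < lam) (a : ℝ) (ha0 : 0 < a) (ha1 : a ≤ 1) :
    ∃ C : ℝ, ∃ m₀ : ℕ, ∀ m : ℕ, m₀ ≤ m →
      Kb lam (nuAlpha a) m ≤ C + 2 * (m : ℝ) / a :=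
  stmt_10_general lam hlam a ha0
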